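/- arXiv:1002.0519 — 2 statements merged into one kernel-verified Lean document; each statement's English description precedes it below -/
import Mathlib

section
/- Let x ∈ ℂ, let z ∈ ℤ[i] be such that z and conj(z) are coprime in ℤ[i], and let ε ∈ {1, −1, i, −i}. The reflection T: w ↦ ε·(z/conj(z))·conj(w) belongs to OC(x+Γ) if and only if εz·conj(x) − conj(z)·x ∈ ℤ[i]. -/
open Pointwise Complex ComplexConjugate

/-- The square lattice `Γ = ℤ[i]`, i.e. the Gaussian integers viewed as an additive
subgroup of `ℂ`. -/
noncomputable def Zi : AddSubgroup ℂ :=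
  AddMonoidHom.range (GaussianInt.toComplex.toAddMonoidHom)

/-- `f` is (the underlying map of) a surjective real-linear isometry of `ℂ`. -/
def IsLinIso (f : ℂ → ℂ) : Prop := ∃ R : ℂ ≃ₗᵢ[ℝ] ℂ, ⇑R = f

/-- `f` is a rotation of `ℂ`, i.e. multiplication by a complex number of modulus 1. -/
def IsRotation (f : ℂ → ℂ) : Prop := ∃ u : ℂ, ‖u‖ = 1 ∧ ∀ w, f w = u * w

/-- `f` is a reflection of `ℂ`, i.e. `w ↦ u * conj w` for a complex number `u` of
modulus 1. -/
def IsReflection (f : ℂ → ℂ) : Prop := ∃ u : ℂ, ‖u‖ = 1 ∧ ∀ w, f w = u * conj w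

/-- The shifted square lattice `x + Γ` as a subset of `ℂ`. -/
noncomputable def shiftedZi (x : ℂ) : Set ℂ := x +ᵥ (Zi : Set ℂ)

/-- `OC (x+Γ)`: the set of (maps of) surjective real-linear isometries `f` of `ℂ` such
that `(x+Γ) ∩ f(x+Γ)` is a coset `c + Λ`, with `c ∈ x+Γ` and `Λ` a finite-index
additive subgroup of `Γ = ℤ[i]`. -/
noncomputable def OCs (x : ℂ) : Set (ℂ → ℂ) :=
  {f | IsLinIso f ∧ ∃ c ∈ shiftedZi x, ∃ Λ : AddSubgroup ℂ, Λ ≤ Zi ∧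
    Λ.relIndex Zi ≠ 0 ∧ shiftedZi x ∩ (f '' shiftedZi x) = c +ᵥ (Λ : Set ℂ)}

/-- `SOC (x+Γ)`: the rotations among the coincidence isometries of `x + Γ`. -/
noncomputable def SOCs (x : ℂ) : Set (ℂ → ℂ) := {f ∈ OCs x | IsRotation f}

/-!
A point `x + g` of `x + Γ` lies in `T(x + Γ)` exactly when `z̄ g - ε z γ = ε z x̄ - z̄ x` for
some `γ ∈ Γ`. Hence a nonempty intersection forces `ε z x̄ - z̄ x ∈ Γ`; conversely, if this number
is some `k ∈ Γ`, then, `ε` being a unit, the condition reads `z ∣ z̄ g - k`, and since `z` and `z̄`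
are coprime this is a congruence `g ≡ g₀ (mod z)`. So the intersection is the coset
`x + g₀ + zΓ`, and `zΓ` has finite index in `Γ`.
-/

namespace GaussianInt

def equivProd : GaussianInt ≃ₗ[ℤ] ℤ × ℤ where
  toFun g := (g.re, g.im)
  invFun p := ⟨p.1, p.2⟩
  map_add' _ _ := rfl
  map_smul' n g := by simp
  left_inv _ := rfl
  right_inv _ := rfl

instance : Module.Free ℤ GaussianInt := .of_equiv equivProd.symm

instance : Module.Finite ℤ GaussianInt := .equiv equivProd.symm

theorem index_span_singleton_ne_zero {z : GaussianInt} (hz : z ≠ 0) :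
    (Ideal.span {z}).toAddSubgroup.index ≠ 0 :=
  @AddSubgroup.index_ne_zero_of_finite _ _ _
    ((Ideal.span {z}).finiteQuotientOfFreeOfNeBot (by simpa using hz))

theorem norm_toComplex_of_isUnit {e : GaussianInt} (he : IsUnit e) : ‖(e : ℂ)‖ = 1 := by
  have hnorm : e.norm = 1 := (Zsqrtd.norm_eq_one_iff' (by norm_num) e).2 he
  have hsq : ‖(e : ℂ)‖ ^ 2 = 1 := by
    rw [← Complex.normSq_eq_norm_sq, ← intCast_real_norm, hnorm, Int.cast_one]
  exact (pow_eq_one_iff_of_nonneg (_root_.norm_nonneg _) two_ne_zero).1 hsq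

theorem exists_isUnit_toComplex_eq {ε : ℂ} (hε : ε ∈ ({1, -1, I, -I} : Set ℂ)) :
    ∃ e : GaussianInt, IsUnit e ∧ (e : ℂ) = ε := by
  rcases hε with rfl | rfl | rfl | rfl
  · exact ⟨1, isUnit_one, toComplex_one⟩
  · exact ⟨-1, isUnit_one.neg, by simp⟩
  · exact ⟨⟨0, 1⟩, IsUnit.of_mul_eq_one ⟨0, -1⟩ (by decide), by simp [toComplex_def']⟩
  · exact ⟨⟨0, -1⟩, IsUnit.of_mul_eq_one ⟨0, 1⟩ (by decide), by simp [toComplex_def']⟩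

end GaussianInt

theorem IsCoprime.exists_forall_dvd_mul_sub_iff {R : Type*} [CommRing R] {a z : R}
    (h : IsCoprime a z) (k : R) : ∃ g₀ : R, ∀ g, z ∣ a * g - k ↔ z ∣ g - g₀ := by
  obtain ⟨u, v, huv⟩ := h
  refine ⟨u * k, fun g => ⟨fun hdvd => ?_, fun hdvd => ?_⟩⟩
  · have : g - u * k = u * (a * g - k) + z * (v * g) := by linear_combination (-g) * huv
    rw [this]
    exact dvd_add (hdvd.mul_left u) (dvd_mul_right z _)
  · have : a * g - k = a * (g - u * k) - z * (v * k) := by linear_combination k * huv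
    rw [this]
    exact dvd_sub (hdvd.mul_left a) (dvd_mul_right z _)

theorem IsUnit.exists_sub_mul_eq_iff_dvd {R : Type*} [CommRing R] {e : R} (he : IsUnit e)
    (z a k : R) : (∃ γ, a - e * z * γ = k) ↔ z ∣ a - k := by
  rw [← he.mul_left_dvd]
  exact exists_congr fun γ => ⟨fun h => by linear_combination h, fun h => by linear_combination h⟩

theorem isLinIso_mul_conj {u : ℂ} (hu : ‖u‖ = 1) : IsLinIso fun w => u * conj w :=
  ⟨conjLIE.trans (rotation ⟨u, by simpa [Submonoid.unitSphere] using hu⟩),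
    funext fun _ => rotation_apply _ _⟩

theorem mem_shiftedZi {x w : ℂ} : w ∈ shiftedZi x ↔ ∃ g : GaussianInt, x + g = w := by
  simp [shiftedZi, Set.mem_vadd_set, Zi]

noncomputable def mulZi (z : GaussianInt) : AddSubgroup ℂ :=
  (Ideal.span {z}).toAddSubgroup.map GaussianInt.toComplex.toAddMonoidHom

theorem mulZi_le_Zi (z : GaussianInt) : mulZi z ≤ Zi := by
  rw [Zi, AddMonoidHom.range_eq_map]
  exact AddSubgroup.map_mono le_top

theorem relIndex_mulZi_ne_zero {z : GaussianInt} (hz : z ≠ 0) : (mulZi z).relIndex Zi ≠ 0 := by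
  rw [mulZi, Zi, AddMonoidHom.range_eq_map,
    AddSubgroup.relIndex_map_map_of_injective _ _ GaussianInt.toComplex_injective,
    AddSubgroup.relIndex_top_right]
  exact GaussianInt.index_span_singleton_ne_zero hz

theorem mem_vadd_mulZi {x w : ℂ} {z g₀ : GaussianInt} :
    w ∈ (x + g₀) +ᵥ (mulZi z : Set ℂ) ↔ ∃ g : GaussianInt, x + g = w ∧ z ∣ g - g₀ := by
  simp only [Set.mem_vadd_set, SetLike.mem_coe, mulZi, AddSubgroup.mem_map,
    Submodule.mem_toAddSubgroup, Ideal.mem_span_singleton, vadd_eq_add]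
  constructor
  · rintro ⟨_, ⟨m, hm, rfl⟩, rfl⟩
    exact ⟨g₀ + m, by simp [add_assoc], by simpa using hm⟩
  · rintro ⟨g, rfl, hg⟩
    exact ⟨_, ⟨g - g₀, hg, rfl⟩, by simp⟩

theorem mul_div_conj_mul_eq_iff {ε z x g γ : ℂ} (hz : conj z ≠ 0) :
    ε * (z / conj z) * (conj x + γ) = x + g ↔
      conj z * g - ε * z * γ = ε * z * conj x - conj z * x := by
  rw [mul_div_assoc', div_mul_eq_mul_div, div_eq_iff hz]
  exact ⟨fun h => by linear_combination -h, fun h => by linear_combination -h⟩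

theorem mem_shiftedZi_inter_image_iff {x w : ℂ} {z e : GaussianInt} (hz : conj (z : ℂ) ≠ 0) :
    w ∈ shiftedZi x ∩ (fun w => e * ((z : ℂ) / conj (z : ℂ)) * conj w) '' shiftedZi x ↔
      ∃ g γ : GaussianInt, x + g = w ∧
        ((star z * g - e * z * γ : GaussianInt) : ℂ) = e * z * conj x - conj (z : ℂ) * x := by
  simp only [Set.mem_inter_iff, Set.mem_image, mem_shiftedZi]
  constructor
  · rintro ⟨⟨g, rfl⟩, _, ⟨γ, rfl⟩, hγ⟩
    refine ⟨g, star γ, rfl, ?_⟩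
    rw [map_add] at hγ
    simpa [GaussianInt.toComplex_star] using (mul_div_conj_mul_eq_iff hz).1 hγ
  · rintro ⟨g, γ, rfl, hγ⟩
    refine ⟨⟨g, rfl⟩, _, ⟨star γ, rfl⟩, ?_⟩
    rw [map_add, GaussianInt.toComplex_star, Complex.conj_conj]
    exact (mul_div_conj_mul_eq_iff hz).2 (by simpa [GaussianInt.toComplex_star] using hγ)

theorem reflection_mem_OCs_iff_of_isUnit (x : ℂ) {z e : GaussianInt}
    (hcop : IsCoprime z (star z)) (he : IsUnit e) :
    (fun w => e * ((z : ℂ) / conj (z : ℂ)) * conj w) ∈ OCs x ↔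
      (e : ℂ) * z * conj x - conj (z : ℂ) * x ∈ Zi := by
  have hz : z ≠ 0 := by
    rintro rfl
    rw [star_zero, isCoprime_zero_left] at hcop
    exact not_isUnit_zero hcop
  have hzC : conj (z : ℂ) ≠ 0 := by simpa [← GaussianInt.toComplex_star] using hz
  constructor
  · rintro ⟨-, c, -, Λ, -, -, hset⟩
    have hc : c ∈ c +ᵥ (Λ : Set ℂ) := ⟨0, Λ.zero_mem, add_zero c⟩
    rw [← hset, mem_shiftedZi_inter_image_iff hzC] at hc
    obtain ⟨g, γ, -, hk⟩ := hc
    exact ⟨_, hk⟩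
  · rintro ⟨k, hk⟩
    obtain ⟨g₀, hg₀⟩ := hcop.symm.exists_forall_dvd_mul_sub_iff k
    have hu : ‖(e : ℂ) * ((z : ℂ) / conj (z : ℂ))‖ = 1 := by
      rw [norm_mul, norm_div, RCLike.norm_conj, div_self (by simpa using hz),
        GaussianInt.norm_toComplex_of_isUnit he, mul_one]
    refine ⟨isLinIso_mul_conj hu, x + g₀, mem_shiftedZi.2 ⟨g₀, rfl⟩, mulZi z, mulZi_le_Zi z,
      relIndex_mulZi_ne_zero hz, Set.ext fun w => ?_⟩
    rw [mem_shiftedZi_inter_image_iff hzC, mem_vadd_mulZi]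
    refine exists_congr fun g => ?_
    have hkC : (k : ℂ) = _ := hk
    simp only [← hkC, GaussianInt.toComplex_inj, ← hg₀, ← he.exists_sub_mul_eq_iff_dvd z,
      exists_and_left]

theorem reflection_mem_OC_iff (x : ℂ) (z : GaussianInt) (hcop : IsCoprime z (star z))
    (ε : ℂ) (hε : ε ∈ ({1, -1, I, -I} : Set ℂ)) :
    (fun w => ε * ((z : ℂ) / conj (z : ℂ)) * conj w) ∈ OCs x ↔
      ε * (z : ℂ) * conj x - conj (z : ℂ) * x ∈ Zi := by
  obtain ⟨e, he, rfl⟩ := GaussianInt.exists_isUnit_toComplex_eq hε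
  exact reflection_mem_OCs_iff_of_isUnit x hcop he
end

section
/- Let x ∈ ℂ. The set OC(x+Γ) is a subgroup of OC(Γ) (i.e., it contains the identity and is closed under composition and inverses) if and only if for all T₁, T₂ ∈ OC(x+Γ) that are reflections (orientation-reversing, of the form w ↦ u·conj(w) with |u| = 1), the rotation T₁ ∘ T₂ belongs to SOC(x+Γ). -/
open Pointwise Complex ComplexConjugate

/-!
A real-linear isometry `f w = u * σ w` (`σ = id` or `conj`) lies in `OC(x+Γ)` iff `Γ ∩ uΓ` has
finite index, i.e. `u = a / b` with coprime Gaussian integers, and `(x+Γ) ∩ f(x+Γ)` is nonempty,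
which by Bézout means `b * x - a * σ x ∈ Γ`. For a composite `f₁ ∘ f₂` the unreduced fraction
`a₁ σ₁(a₂) / (b₁ σ₁(b₂))` satisfies this condition automatically; the point is to divide out the
common factor `d`, which is possible as soon as some `t` coprime to `d` has `t * x ∈ Γ` and
`t * conj x ∈ Γ`. When `f₁` is the rotation by `a₁ / b₁`, `t = b₁ - a₁` does it: `t * x ∈ Γ` is the
condition for `f₁`, `t` is coprime to `d`, and since `|a₁| = |b₁|` the conjugate of `t` is an
associate of `t`. As `T ∘ R = R⁻¹ ∘ T` for a reflection `T` and a rotation `R`, only composites of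
two reflections escape this argument.
-/

open GaussianInt

local notation "ℤ[i]" => GaussianInt

lemma isCoprime_sub_of_dvd_mul {R : Type*} [CommRing R] {a₁ b₁ a₂ b₂ d : R}
    (h₁ : IsCoprime a₁ b₁) (h₂ : IsCoprime a₂ b₂) (ha : d ∣ a₁ * a₂) (hb : d ∣ b₁ * b₂) :
    IsCoprime d (b₁ - a₁) := by
  -- `a₁` and `b₁` are invertible modulo `b₁ - a₁`, so `a₂` and `b₂` lie in `(d, b₁ - a₁)`.
  obtain ⟨p, q, hpq⟩ := h₁
  obtain ⟨α, β, hαβ⟩ := h₂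
  obtain ⟨k, hk⟩ := ha
  obtain ⟨k', hk'⟩ := hb
  refine ⟨(p + q) * (α * k + β * k'), α * q * a₂ - β * p * b₂, ?_⟩
  linear_combination (α * a₂ + β * b₂) * hpq + hαβ - α * (p + q) * hk - β * (p + q) * hk'

lemma mem_Zi {w : ℂ} : w ∈ Zi ↔ ∃ g : ℤ[i], toComplex g = w := by
  simp [Zi]

lemma toComplex_mem_Zi (g : ℤ[i]) : toComplex g ∈ Zi := mem_Zi.2 ⟨g, rfl⟩

lemma mul_mem_Zi (g : ℤ[i]) {w : ℂ} (hw : w ∈ Zi) : toComplex g * w ∈ Zi := by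
  obtain ⟨h, rfl⟩ := mem_Zi.1 hw
  exact mem_Zi.2 ⟨g * h, toComplex_mul g h⟩

lemma conj_mem_Zi {w : ℂ} (hw : w ∈ Zi) : conj w ∈ Zi := by
  obtain ⟨h, rfl⟩ := mem_Zi.1 hw
  exact mem_Zi.2 ⟨star h, toComplex_star h⟩

lemma mem_Zi_of_isCoprime {d t : ℤ[i]} {y : ℂ} (hcop : IsCoprime d t)
    (hd : toComplex d * y ∈ Zi) (ht : toComplex t * y ∈ Zi) : y ∈ Zi := by
  obtain ⟨p, q, hpq⟩ := hcop
  have hpq' : toComplex p * toComplex d + toComplex q * toComplex t = 1 := by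
    simpa using congrArg toComplex hpq
  have hy : y = toComplex p * (toComplex d * y) + toComplex q * (toComplex t * y) := by
    linear_combination -y * hpq'
  rw [hy]
  exact Zi.add_mem (mul_mem_Zi p hd) (mul_mem_Zi q ht)

lemma natCast_toNat_norm (a : ℤ[i]) :
    ((a.norm.toNat : ℕ) : ℂ) = toComplex a * toComplex (star a) := by
  rw [toComplex_star, Complex.mul_conj, ← intCast_real_norm]
  exact_mod_cast Int.toNat_of_nonneg (Zsqrtd.norm_nonneg (by norm_num) a)

instance : Infinite Zi :=
  Infinite.of_injective (fun n : ℤ => (⟨toComplex n, toComplex_mem_Zi n⟩ : Zi))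
    fun m n h => by simpa using h

lemma Zi_fg : Zi.FG := by
  refine ⟨{toComplex 1, toComplex ⟨0, 1⟩}, le_antisymm ?_ ?_⟩
  · rw [AddSubgroup.closure_le, Finset.coe_pair]
    exact Set.pair_subset (toComplex_mem_Zi 1) (toComplex_mem_Zi _)
  · rintro _ ⟨g, rfl⟩
    have hg : toComplex g = g.re • toComplex 1 + g.im • toComplex ⟨0, 1⟩ := by
      simp [toComplex_def]
    change toComplex g ∈ _
    rw [hg]
    exact add_mem (zsmul_mem (AddSubgroup.subset_closure (by simp)) _)
      (zsmul_mem (AddSubgroup.subset_closure (by simp)) _)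

lemma mem_shiftedZi_s7 {x w : ℂ} : w ∈ shiftedZi x ↔ w - x ∈ Zi := by
  rw [shiftedZi, mem_leftAddCoset_iff, neg_add_eq_sub, SetLike.mem_coe]

lemma vadd_inter_image_vadd {G : Type*} [AddCommGroup G] (L : AddSubgroup G) (F : G →+ G)
    {x c : G} (hc : c ∈ (x +ᵥ (L : Set G)) ∩ F '' (x +ᵥ (L : Set G))) :
    (x +ᵥ (L : Set G)) ∩ F '' (x +ᵥ (L : Set G)) =
      c +ᵥ ((L ⊓ L.map F : AddSubgroup G) : Set G) := by
  rw [Set.image_vadd_distrib, ← AddSubgroup.coe_map] at hc ⊢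
  rw [AddSubgroup.coe_inf, Set.vadd_set_inter,
    (leftAddCoset_eq_iff _).2 ((mem_leftAddCoset_iff x).1 hc.1),
    (leftAddCoset_eq_iff _).2 ((mem_leftAddCoset_iff (F x)).1 hc.2)]

lemma mem_OCs_iff {x : ℂ} (R : ℂ ≃ₗᵢ[ℝ] ℂ) :
    ⇑R ∈ OCs x ↔ (shiftedZi x ∩ R '' shiftedZi x).Nonempty ∧
      (Zi ⊓ Zi.map (R : ℂ →+ ℂ)).relIndex Zi ≠ 0 := by
  constructor
  · rintro ⟨-, c, -, Λ, -, hΛ, hcoset⟩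
    have hc : c ∈ shiftedZi x ∩ R '' shiftedZi x := by
      rw [hcoset]
      exact mem_own_leftAddCoset Λ.toAddSubmonoid c
    have hle : (Λ : Set ℂ) ⊆ (Zi ⊓ Zi.map (R : ℂ →+ ℂ) : AddSubgroup ℂ) := by
      rw [← Set.vadd_set_subset_vadd_set_iff (a := c), ← hcoset]
      exact (vadd_inter_image_vadd Zi (R : ℂ →+ ℂ) hc).le
    exact ⟨⟨c, hc⟩, ne_zero_of_dvd_ne_zero hΛ (AddSubgroup.relIndex_dvd_of_le_left Zi hle)⟩
  · rintro ⟨⟨c, hc⟩, hrel⟩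
    exact ⟨⟨R, rfl⟩, c, hc.1, _, inf_le_left, hrel, vadd_inter_image_vadd Zi (R : ℂ →+ ℂ) hc⟩

section

variable {σ : ℂ ≃+ ℂ} {u x : ℂ} {F : ℂ →+ ℂ}

lemma relIndex_inf_map_ne_zero_iff (hσ : ∀ w, σ w ∈ Zi ↔ w ∈ Zi) (hu : u ≠ 0)
    (hF : ∀ w, F w = u * σ w) :
    (Zi ⊓ Zi.map F).relIndex Zi ≠ 0 ↔
      ∃ a b : ℤ[i], b ≠ 0 ∧ toComplex b * u = toComplex a := by
  constructor
  · intro hrel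
    obtain ⟨l, ⟨hlZi, m, hmZi, rfl⟩, hl0⟩ := (Zi ⊓ Zi.map F).bot_or_exists_ne_zero.resolve_left
      fun h => hrel (by rw [h, AddSubgroup.relIndex_bot_left, Nat.card_eq_zero_of_infinite])
    obtain ⟨a, ha⟩ := mem_Zi.1 hlZi
    obtain ⟨b, hb⟩ := mem_Zi.1 ((hσ m).2 hmZi)
    refine ⟨a, b, ?_, ?_⟩
    · rintro rfl
      simp [hF, ← hb] at hl0
    · rw [ha, hb, hF, mul_comm]
  · rintro ⟨a, b, hb, hba⟩
    have ha : a ≠ 0 := by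
      rintro rfl
      simp [toComplex_eq_zero, hb, hu] at hba
    have hle : Zi.map (nsmulAddMonoidHom a.norm.toNat) ≤ Zi ⊓ Zi.map F := by
      rintro _ ⟨w, hw, rfl⟩
      refine ⟨nsmul_mem hw _, σ.symm (toComplex (star a * b) * w), ?_, ?_⟩
      · exact (hσ _).1 (by rw [AddEquiv.apply_symm_apply]; exact mul_mem_Zi _ hw)
      · simp only [hF, AddEquiv.apply_symm_apply, nsmulAddMonoidHom_apply, nsmul_eq_mul,
          natCast_toNat_norm, toComplex_mul]
        linear_combination toComplex (star a) * w * hba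
    have hn : a.norm.toNat ≠ 0 := by
      rw [Ne, Int.toNat_eq_zero, not_le]
      exact norm_pos.2 ha
    have := AddSubgroup.isFiniteRelIndex_map_nsmulAddMonoidHom_of_fg Zi_fg hn
    have := AddSubgroup.isFiniteRelIndex_of_le_left Zi hle
    exact AddSubgroup.relIndex_ne_zero

lemma inter_image_nonempty_iff (hσ : ∀ w, σ w ∈ Zi ↔ w ∈ Zi) (hF : ∀ w, F w = u * σ w)
    {a b : ℤ[i]} (hb : b ≠ 0) (hab : IsCoprime a b) (hba : toComplex b * u = toComplex a) :
    (shiftedZi x ∩ F '' shiftedZi x).Nonempty ↔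
      toComplex b * x - toComplex a * σ x ∈ Zi := by
  constructor
  · rintro ⟨c, hc, z, hz, rfl⟩
    have hσz : σ (z - x) ∈ Zi := (hσ _).2 (mem_shiftedZi_s7.1 hz)
    have key : toComplex b * x - toComplex a * σ x =
        toComplex a * σ (z - x) - toComplex b * (F z - x) := by
      rw [hF, map_sub, ← hba]
      ring
    rw [key]
    exact Zi.sub_mem (mul_mem_Zi a hσz) (mul_mem_Zi b (mem_shiftedZi_s7.1 hc))
  · intro hk
    set k := toComplex b * x - toComplex a * σ x
    obtain ⟨p, q, hpq⟩ := hab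
    have hpq' : toComplex p * toComplex a + toComplex q * toComplex b = 1 := by
      simpa using congrArg toComplex hpq
    refine ⟨x - toComplex q * k, ?_, x + σ.symm (toComplex p * k), ?_, ?_⟩
    · rw [mem_shiftedZi_s7, sub_sub_cancel_left]
      exact Zi.neg_mem (mul_mem_Zi q hk)
    · rw [mem_shiftedZi_s7, add_sub_cancel_left]
      exact (hσ _).1 (by rw [AddEquiv.apply_symm_apply]; exact mul_mem_Zi p hk)
    · rw [hF, map_add, AddEquiv.apply_symm_apply]
      refine mul_left_cancel₀ (toComplex_eq_zero.not.2 hb) ?_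
      linear_combination (toComplex p * k + σ x) * hba + k * hpq'

/-- The map `w ↦ u * σ w` (`σ = id` or `conj`) lies in `OC(x+Γ)` iff this holds with `y = σ x`. -/
def CoincidenceCondition (u x y : ℂ) : Prop :=
  ∃ a b : ℤ[i], b ≠ 0 ∧ IsCoprime a b ∧ toComplex b * u = toComplex a ∧
    toComplex b * x - toComplex a * y ∈ Zi

lemma exists_isCoprime_of_mul_eq {a b : ℤ[i]} (hb : b ≠ 0)
    (hba : toComplex b * u = toComplex a) :
    ∃ d A B : ℤ[i], d * A = a ∧ d * B = b ∧ B ≠ 0 ∧ IsCoprime A B ∧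
      toComplex B * u = toComplex A := by
  obtain ⟨A, B, d, hAB, rfl, rfl⟩ := UniqueFactorizationMonoid.exists_reduced_factors' a b hb
  have hd : toComplex d ≠ 0 := toComplex_eq_zero.not.2 (left_ne_zero_of_mul hb)
  refine ⟨d, A, B, rfl, rfl, right_ne_zero_of_mul hb, hAB.isCoprime, ?_⟩
  refine mul_left_cancel₀ hd ?_
  simpa [toComplex_mul, mul_assoc] using hba

lemma mem_OCs_iff_coincidenceCondition (hσ : ∀ w, σ w ∈ Zi ↔ w ∈ Zi)
    (R : ℂ ≃ₗᵢ[ℝ] ℂ) (hR : ∀ w, R w = u * σ w) :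
    ⇑R ∈ OCs x ↔ CoincidenceCondition u x (σ x) := by
  have hu : u ≠ 0 := by
    rintro rfl
    simpa [hR] using R.norm_map 1
  rw [mem_OCs_iff]
  constructor
  · rintro ⟨hne, hrel⟩
    obtain ⟨a, b, hb, hba⟩ := (relIndex_inf_map_ne_zero_iff hσ hu hR).1 hrel
    obtain ⟨-, A, B, -, -, hB, hAB, hBA⟩ := exists_isCoprime_of_mul_eq hb hba
    exact ⟨A, B, hB, hAB, hBA,
      (inter_image_nonempty_iff (F := (R : ℂ →+ ℂ)) hσ hR hB hAB hBA).1 hne⟩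
  · rintro ⟨a, b, hb, hab, hba, hk⟩
    exact ⟨(inter_image_nonempty_iff (F := (R : ℂ →+ ℂ)) hσ hR hb hab hba).2 hk,
      (relIndex_inf_map_ne_zero_iff hσ hu hR).2 ⟨a, b, hb, hba⟩⟩

lemma rotation_mem_OCs_iff (hu : ‖u‖ = 1) :
    (fun w => u * w) ∈ OCs x ↔ CoincidenceCondition u x x :=
  mem_OCs_iff_coincidenceCondition (σ := AddEquiv.refl ℂ) (fun _ => Iff.rfl)
    (rotation ⟨u, mem_sphere_zero_iff_norm.2 hu⟩) fun _ => rfl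

lemma reflection_mem_OCs_iff (hu : ‖u‖ = 1) :
    (fun w => u * conj w) ∈ OCs x ↔ CoincidenceCondition u x (conj x) :=
  mem_OCs_iff_coincidenceCondition (σ := starAddEquiv)
    (fun w => ⟨fun h => by simpa using conj_mem_Zi h, conj_mem_Zi⟩)
    (conjLIE.trans (rotation ⟨u, mem_sphere_zero_iff_norm.2 hu⟩)) fun _ => rfl

lemma CoincidenceCondition.of_mul_eq {y : ℂ} {a b t : ℤ[i]} (hb : b ≠ 0)
    (hba : toComplex b * u = toComplex a) (hk : toComplex b * x - toComplex a * y ∈ Zi)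
    (htx : toComplex t * x ∈ Zi) (hty : toComplex t * y ∈ Zi)
    (hcop : ∀ d, d ∣ a → d ∣ b → IsCoprime d t) : CoincidenceCondition u x y := by
  obtain ⟨d, A, B, rfl, rfl, hB, hAB, hBA⟩ := exists_isCoprime_of_mul_eq hb hba
  refine ⟨A, B, hB, hAB, hBA,
    mem_Zi_of_isCoprime (hcop d (dvd_mul_right d A) (dvd_mul_right d B)) ?_ ?_⟩
  · convert hk using 1
    simp only [toComplex_mul]
    ring
  · convert Zi.sub_mem (mul_mem_Zi B htx) (mul_mem_Zi A hty) using 1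
    ring

lemma exists_star_eq_mul {a b : ℤ[i]} (hu : ‖u‖ = 1) (hb : b ≠ 0) (hab : IsCoprime a b)
    (hba : toComplex b * u = toComplex a) :
    ∃ e : ℤ[i], e * star e = 1 ∧ star a = b * e ∧ star b = a * e := by
  have hnorm : a.norm = b.norm := by
    have : Complex.normSq (toComplex a) = Complex.normSq (toComplex b) := by
      rw [← hba, Complex.normSq_mul, Complex.normSq_eq_norm_sq u, hu, one_pow, mul_one]
    exact_mod_cast (intCast_real_norm a).trans (this.trans (intCast_real_norm b).symm)
  obtain ⟨e, he⟩ : b ∣ star a := by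
    refine hab.symm.dvd_of_dvd_mul_left ⟨star b, ?_⟩
    rw [← Zsqrtd.norm_eq_mul_conj, ← Zsqrtd.norm_eq_mul_conj, hnorm]
  have hne : e.norm = 1 := by
    have := congrArg Zsqrtd.norm he
    rw [Zsqrtd.norm_conj, Zsqrtd.norm_mul, hnorm] at this
    exact (mul_eq_left₀ (norm_eq_zero.not.2 hb)).1 this.symm
  have hee : e * star e = 1 := by
    rw [← Zsqrtd.norm_eq_mul_conj, hne, Int.cast_one]
  refine ⟨e, hee, he, ?_⟩
  have := congrArg star he
  rw [star_star, star_mul'] at this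
  linear_combination (-star b) * hee - e * this

lemma sub_mul_conj_mem_Zi {a b : ℤ[i]} (hu : ‖u‖ = 1) (hb : b ≠ 0) (hab : IsCoprime a b)
    (hba : toComplex b * u = toComplex a) (h : toComplex (b - a) * x ∈ Zi) :
    toComplex (b - a) * conj x ∈ Zi := by
  obtain ⟨e, hee, ha, hb⟩ := exists_star_eq_mul hu hb hab hba
  have hstar : b - a = -star e * star (b - a) := by
    rw [star_sub, ha, hb]
    linear_combination (a - b) * hee
  have := mul_mem_Zi (-star e) (conj_mem_Zi h)
  rwa [map_mul, ← toComplex_star, ← mul_assoc, ← toComplex_mul, ← hstar] at this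

lemma CoincidenceCondition.mul {u₁ u₂ y : ℂ} (h₁ : CoincidenceCondition u₁ x x)
    (hu₁ : ‖u₁‖ = 1) (h₂ : CoincidenceCondition u₂ x y) (hy : y = x ∨ y = conj x) :
    CoincidenceCondition (u₁ * u₂) x y := by
  obtain ⟨a₁, b₁, hb₁, hab₁, hba₁, hk₁⟩ := h₁
  obtain ⟨a₂, b₂, hb₂, hab₂, hba₂, hk₂⟩ := h₂
  have htx : toComplex (b₁ - a₁) * x ∈ Zi := by rwa [toComplex_sub, sub_mul]
  have hty : toComplex (b₁ - a₁) * y ∈ Zi := by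
    rcases hy with rfl | rfl
    exacts [htx, sub_mul_conj_mem_Zi hu₁ hb₁ hab₁ hba₁ htx]
  refine .of_mul_eq (a := a₁ * a₂) (b := b₁ * b₂) (mul_ne_zero hb₁ hb₂) ?_ ?_ htx hty
    fun d ha hb => isCoprime_sub_of_dvd_mul hab₁ hab₂ ha hb
  · rw [toComplex_mul, toComplex_mul, ← hba₁, ← hba₂]
    ring
  · convert Zi.add_mem (mul_mem_Zi b₁ hk₂) (mul_mem_Zi a₂ hty) using 1
    simp only [toComplex_mul, toComplex_sub]
    ring

lemma CoincidenceCondition.inv (h : CoincidenceCondition u x x) (hu : u ≠ 0) :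
    CoincidenceCondition u⁻¹ x x := by
  obtain ⟨a, b, hb, hab, hba, hk⟩ := h
  have ha : a ≠ 0 := by
    rintro rfl
    simp [toComplex_eq_zero, hb, hu] at hba
  refine ⟨b, a, ha, hab.symm, ?_, ?_⟩
  · rw [← hba, mul_inv_cancel_right₀ hu]
  · simpa using Zi.neg_mem hk

lemma IsLinIso.isRotation_or_isReflection {f : ℂ → ℂ} (hf : IsLinIso f) :
    IsRotation f ∨ IsReflection f := by
  obtain ⟨R, rfl⟩ := hf
  obtain ⟨a, rfl | rfl⟩ := linear_isometry_complex R
  · exact .inl ⟨a, Circle.norm_coe a, fun w => rfl⟩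
  · exact .inr ⟨a, Circle.norm_coe a, fun w => rfl⟩

lemma IsReflection.comp {f g : ℂ → ℂ} (hf : IsReflection f) (hg : IsReflection g) :
    IsRotation (f ∘ g) := by
  obtain ⟨u₁, hu₁, hf⟩ := hf
  obtain ⟨u₂, hu₂, hg⟩ := hg
  refine ⟨u₁ * conj u₂, by simp [hu₁, hu₂], fun w => ?_⟩
  simp only [Function.comp_apply, hf, hg, map_mul, conj_conj]
  ring

lemma id_mem_OCs : id ∈ OCs x := by
  rw [show (id : ℂ → ℂ) = fun w => 1 * w from funext fun w => (one_mul w).symm,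
    rotation_mem_OCs_iff norm_one]
  exact ⟨1, 1, one_ne_zero, isCoprime_one_left, by simp, by simp [Zi.zero_mem]⟩

lemma comp_mem_OCs {f g : ℂ → ℂ} (hf : f ∈ OCs x) (hg : g ∈ OCs x)
    (hrefl : IsReflection f → IsReflection g → f ∘ g ∈ OCs x) : f ∘ g ∈ OCs x := by
  rcases hf.1.isRotation_or_isReflection with ⟨u₁, hu₁, hf'⟩ | hf_refl <;>
    rcases hg.1.isRotation_or_isReflection with ⟨u₂, hu₂, hg'⟩ | hg_refl
  · obtain rfl : f = fun w => u₁ * w := funext hf'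
    obtain rfl : g = fun w => u₂ * w := funext hg'
    rw [rotation_mem_OCs_iff hu₁] at hf
    rw [rotation_mem_OCs_iff hu₂] at hg
    convert (rotation_mem_OCs_iff (by simp [hu₁, hu₂])).2 (hf.mul hu₁ hg (.inl rfl)) using 1
    ext w
    exact (mul_assoc _ _ _).symm
  · obtain ⟨u₂, hu₂, hg'⟩ := hg_refl
    obtain rfl : f = fun w => u₁ * w := funext hf'
    obtain rfl : g = fun w => u₂ * conj w := funext hg'
    rw [rotation_mem_OCs_iff hu₁] at hf
    rw [reflection_mem_OCs_iff hu₂] at hg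
    convert (reflection_mem_OCs_iff (by simp [hu₁, hu₂])).2 (hf.mul hu₁ hg (.inr rfl)) using 1
    ext w
    exact (mul_assoc _ _ _).symm
  · obtain ⟨u₁, hu₁, hf'⟩ := hf_refl
    obtain rfl : f = fun w => u₁ * conj w := funext hf'
    obtain rfl : g = fun w => u₂ * w := funext hg'
    rw [reflection_mem_OCs_iff hu₁] at hf
    rw [rotation_mem_OCs_iff hu₂] at hg
    have hu₂0 : u₂ ≠ 0 := by rintro rfl; simp at hu₂
    convert (reflection_mem_OCs_iff (by simp [hu₁, hu₂])).2
      ((hg.inv hu₂0).mul (by simp [hu₂]) hf (.inr rfl)) using 1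
    ext w
    simp only [Function.comp_apply, map_mul, inv_eq_conj hu₂]
    ring
  · exact hrefl hf_refl hg_refl

lemma inv_mem_OCs {f g : ℂ → ℂ} (hf : f ∈ OCs x) (hgf : g ∘ f = id) : g ∈ OCs x := by
  have hleft : Function.LeftInverse g f := congrFun hgf
  rcases hf.1.isRotation_or_isReflection with ⟨u, hu, hf'⟩ | ⟨u, hu, hf'⟩ <;>
    have hu0 : u ≠ 0 := by rintro rfl; simp at hu
  · obtain rfl : f = fun w => u * w := funext hf'
    rw [hleft.eq_rightInverse (g₂ := fun w => u⁻¹ * w) fun w => mul_inv_cancel_left₀ hu0 w,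
      rotation_mem_OCs_iff (by simp [hu])]
    exact ((rotation_mem_OCs_iff hu).1 hf).inv hu0
  · obtain rfl : f = fun w => u * conj w := funext hf'
    rwa [hleft.eq_rightInverse (g₂ := fun w => u * conj w) fun w => by
      simp only [map_mul, conj_conj, ← mul_assoc, ← inv_eq_conj hu, mul_inv_cancel₀ hu0,
        one_mul]]

end

theorem OC_shifted_subgroup_iff (x : ℂ) :
    (id ∈ OCs x ∧ (∀ f ∈ OCs x, ∀ g ∈ OCs x, f ∘ g ∈ OCs x) ∧
        (∀ f ∈ OCs x, ∀ g : ℂ → ℂ, g ∘ f = id → f ∘ g = id → g ∈ OCs x)) ↔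
      (∀ T₁ ∈ OCs x, ∀ T₂ ∈ OCs x, IsReflection T₁ → IsReflection T₂ →
        T₁ ∘ T₂ ∈ SOCs x) := by
  constructor
  · rintro ⟨-, hcomp, -⟩ T₁ hT₁ T₂ hT₂ hR₁ hR₂
    exact ⟨hcomp T₁ hT₁ T₂ hT₂, hR₁.comp hR₂⟩
  · intro hrefl
    refine ⟨id_mem_OCs, fun f hf g hg => ?_, fun f hf _ hgf _ => inv_mem_OCs hf hgf⟩
    exact comp_mem_OCs hf hg fun hf' hg' => (hrefl f hf g hg hf' hg').1
end
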